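/- Let P be a simplicial reflexive polytope of dimension n. Then the number of vertices of P satisfies |V(P)| ≤ 3n. -/

import Mathlib

open Set Pointwise

namespace Fano

/-- The ambient rational vector space `N_ℚ = ℚⁿ` (identified with its dual `M_ℚ`). -/
abbrev E (n : ℕ) : Type := Fin n → ℚ

/-- The standard pairing `⟨x, y⟩ = ∑ i, x i * y i` between `N_ℚ` and `M_ℚ`. -/
def pairing {n : ℕ} (x y : E n) : ℚ := ∑ i, x i * y i

/-- A point of `ℚⁿ` is a lattice point if all its coordinates are integers. -/
def IsLatticePt {n : ℕ} (x : E n) : Prop := ∀ i, ∃ z : ℤ, x i = (z : ℚ)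

/-- A lattice polytope: the convex hull of finitely many lattice points. -/
def IsLatticePolytope {n : ℕ} (P : Set (E n)) : Prop :=
  ∃ S : Finset (E n), (∀ x ∈ S, IsLatticePt x) ∧ P = convexHull ℚ (S : Set (E n))

/-- The dual polytope `P* = {y | ⟨x, y⟩ ≥ -1 for all x ∈ P}`. -/
def dualPolytope {n : ℕ} (P : Set (E n)) : Set (E n) :=
  {y | ∀ x ∈ P, -1 ≤ pairing x y}

/-- The set of vertices (= extreme points) of a polytope. -/
def vertices {n : ℕ} (P : Set (E n)) : Set (E n) := Set.extremePoints ℚ P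

/-- `F` is a (nonempty, proper) face of `P`: it is cut out by a supporting hyperplane. -/
def IsFace {n : ℕ} (P F : Set (E n)) : Prop :=
  ∃ (u : E n) (c : ℚ), (∀ x ∈ P, c ≤ pairing x u) ∧
    F = {x ∈ P | pairing x u = c} ∧ F.Nonempty ∧ F ≠ P

/-- A facet of an `n`-dimensional polytope: a face of dimension `n - 1`. -/
def IsFacet {n : ℕ} (P F : Set (E n)) : Prop :=
  IsFace P F ∧ Module.finrank ℚ (affineSpan ℚ F).direction = n - 1

/-- A reflexive polytope: a lattice polytope containing the origin in its interior
(hence of full dimension `n`) whose dual polytope is again a lattice polytope. -/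
def IsReflexivePolytope {n : ℕ} (P : Set (E n)) : Prop :=
  IsLatticePolytope P ∧ (0 : E n) ∈ interior P ∧ IsLatticePolytope (dualPolytope P)

/-- A polytope is simplicial if every facet has exactly `n` vertices
and these are linearly independent. -/
def IsSimplicial {n : ℕ} (P : Set (E n)) : Prop :=
  ∀ F : Set (E n), IsFacet P F →
    ∃ e : Fin n → E n, vertices F = Set.range e ∧ LinearIndependent ℚ e

/-- For `u ∈ V(P*)`, the corresponding facet `F_u = {x ∈ P | ⟨x, u⟩ = -1}` of `P`. -/
def facetOf {n : ℕ} (P : Set (E n)) (u : E n) : Set (E n) :=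
  {x ∈ P | pairing x u = -1}

/-- `δ` is the quantity `δ_P = min{⟨v,u⟩ | v ∈ V(P), u ∈ V(P*), v ∉ F_u}`. -/
def IsDeltaOf {n : ℕ} (P : Set (E n)) (δ : ℚ) : Prop :=
  (∃ v ∈ vertices P, ∃ u ∈ vertices (dualPolytope P), v ∉ facetOf P u ∧ pairing v u = δ) ∧
  (∀ v ∈ vertices P, ∀ u ∈ vertices (dualPolytope P), v ∉ facetOf P u → δ ≤ pairing v u)

/-- A vertex `v` is adjacent to a facet `F = Conv(e₁, …, eₙ)` of a simplicial polytope if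
replacing some vertex of `F` by `v` again yields a facet of `P`. -/
def AdjacentTo {n : ℕ} (P : Set (E n)) (v : E n) (F : Set (E n)) : Prop :=
  ∃ w ∈ vertices F, IsFacet P (convexHull ℚ (insert v (vertices F \ {w})))

/-! ### Basic pairing lemmas -/

variable {n : ℕ}

lemma pairing_comm (x y : E n) : pairing x y = pairing y x := by
  unfold pairing; exact Finset.sum_congr rfl fun i _ => mul_comm _ _

lemma pairing_add_left (x x' y : E n) : pairing (x + x') y = pairing x y + pairing x' y := by
  unfold pairing
  rw [← Finset.sum_add_distrib]
  exact Finset.sum_congr rfl fun i _ => by simp [add_mul]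

lemma pairing_smul_left (c : ℚ) (x y : E n) : pairing (c • x) y = c * pairing x y := by
  unfold pairing
  rw [Finset.mul_sum]
  exact Finset.sum_congr rfl fun i _ => by simp [mul_assoc]

lemma pairing_add_right (x y y' : E n) : pairing x (y + y') = pairing x y + pairing x y' := by
  rw [pairing_comm, pairing_add_left, pairing_comm y x, pairing_comm y' x]

lemma pairing_smul_right (c : ℚ) (x y : E n) : pairing x (c • y) = c * pairing x y := by
  rw [pairing_comm, pairing_smul_left, pairing_comm]

@[simp] lemma pairing_zero_left (y : E n) : pairing 0 y = 0 := by
  unfold pairing; simp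

@[simp] lemma pairing_zero_right (x : E n) : pairing x 0 = 0 := by
  rw [pairing_comm]; simp

lemma pairing_neg_left (x y : E n) : pairing (-x) y = - pairing x y := by
  have := pairing_smul_left (-1) x y
  simpa using this

lemma pairing_sub_right (x y y' : E n) : pairing x (y - y') = pairing x y - pairing x y' := by
  have : y - y' = y + (-1 : ℚ) • y' := by ext i; simp; ring
  rw [this, pairing_add_right, pairing_smul_right]; ring

/-- `pairing` with fixed right argument, as a linear map in the left argument. -/
def pairLin (y : E n) : E n →ₗ[ℚ] ℚ where
  toFun x := pairing x y
  map_add' x x' := pairing_add_left x x' y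
  map_smul' c x := by simp [pairing_smul_left]

@[simp] lemma pairLin_apply (y x : E n) : pairLin y x = pairing x y := rfl

/-- `pairing` with fixed left argument, as a linear map in the right argument. -/
def pairLinR (x : E n) : E n →ₗ[ℚ] ℚ where
  toFun y := pairing x y
  map_add' y y' := pairing_add_right x y y'
  map_smul' c y := by simp [pairing_smul_right]

@[simp] lemma pairLinR_apply (x y : E n) : pairLinR x y = pairing x y := rfl

lemma pairing_single_left (i : Fin n) (y : E n) : pairing (Pi.single i 1) y = y i := by
  unfold pairing
  rw [Finset.sum_eq_single i] <;> simp +contextual [Pi.single_apply]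

lemma pairing_sum_left {α : Type*} (s : Finset α) (f : α → E n) (y : E n) :
    pairing (∑ a ∈ s, f a) y = ∑ a ∈ s, pairing (f a) y :=
  map_sum (pairLin y) f s

/-- Nondegeneracy of the pairing, right argument. -/
lemma eq_zero_of_pairing_right (y : E n) (h : ∀ x, pairing x y = 0) : y = 0 := by
  ext i
  simpa using (pairing_single_left i y).symm.trans (h _)

/-- A linear functional is given by pairing with a vector. -/
lemma exists_pairing_vec (f : E n →ₗ[ℚ] ℚ) : ∃ z : E n, ∀ x, pairing x z = f x := by
  refine ⟨fun i => f (Pi.single i 1), fun x => ?_⟩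
  have hx := pi_eq_sum_univ x
  calc pairing x _ = ∑ i, x i * f (Pi.single i 1) := rfl
    _ = f x := by
        conv_rhs => rw [hx]
        rw [map_sum]
        refine Finset.sum_congr rfl fun i _ => ?_
        rw [map_smul]
        have : (Pi.single i 1 : E n) = fun j => if i = j then 1 else 0 := by
          ext j; simp [Pi.single_apply, eq_comm]
        rw [this]
        simp [smul_eq_mul]

/-! ### Convex hull and halfspace lemmas -/

lemma hull_f_ge {A : Set (E n)} (f : E n →ₗ[ℚ] ℚ) {c : ℚ} (h : ∀ a ∈ A, c ≤ f a) :
    ∀ x ∈ convexHull ℚ A, c ≤ f x := fun _x hx =>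
  convexHull_min h (convex_halfSpace_ge f.isLinear c) hx

lemma hull_pairing_ge {A : Set (E n)} {y : E n} {c : ℚ} (h : ∀ a ∈ A, c ≤ pairing a y) :
    ∀ x ∈ convexHull ℚ A, c ≤ pairing x y :=
  hull_f_ge (pairLin y) h

lemma hull_pairing_le {A : Set (E n)} {y : E n} {c : ℚ} (h : ∀ a ∈ A, pairing a y ≤ c) :
    ∀ x ∈ convexHull ℚ A, pairing x y ≤ c := fun _x hx =>
  convexHull_min h (convex_halfSpace_le (pairLin y).isLinear c) hx

/-- The face of the convex hull of a finite set cut out by a minimizing linear functional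
is the convex hull of the points of the set lying on the face. -/
lemma face_hull_eq (A : Finset (E n)) (f : E n →ₗ[ℚ] ℚ) (c : ℚ) (hA : ∀ a ∈ A, c ≤ f a) :
    {x ∈ convexHull ℚ (A : Set (E n)) | f x = c} = convexHull ℚ {a : E n | a ∈ A ∧ f a = c} := by
  classical
  apply Set.Subset.antisymm
  · rintro x ⟨hx, hfx⟩
    rw [Finset.convexHull_eq] at hx
    obtain ⟨w, hw0, hw1, hwx⟩ := hx
    have hxval : x = ∑ y ∈ A, w y • y := by
      rw [← hwx, Finset.centerMass_eq_of_sum_1 _ _ hw1]; rfl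
    have hfsum : ∑ y ∈ A, w y * (f y - c) = 0 := by
      have hfx' : f x = ∑ y ∈ A, w y * f y := by
        rw [hxval, map_sum]
        exact Finset.sum_congr rfl fun y _ => by rw [map_smul]; rfl
      have hsc : ∑ y ∈ A, w y * c = c := by rw [← Finset.sum_mul, hw1, one_mul]
      calc ∑ y ∈ A, w y * (f y - c)
          = (∑ y ∈ A, w y * f y) - ∑ y ∈ A, w y * c := by
            rw [← Finset.sum_sub_distrib]
            exact Finset.sum_congr rfl fun y _ => by ring
        _ = f x - c := by rw [← hfx', hsc]
        _ = 0 := by rw [hfx]; ring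
    have hzero : ∀ y ∈ A, w y * (f y - c) = 0 :=
      (Finset.sum_eq_zero_iff_of_nonneg
        (fun y hy => mul_nonneg (hw0 y hy) (by linarith [hA y hy]))).1 hfsum
    have hsupp : ∀ y ∈ A, w y ≠ 0 → f y = c := by
      intro y hy hwy
      rcases mul_eq_zero.1 (hzero y hy) with h | h
      · exact absurd h hwy
      · linarith
    have hmass : ({y ∈ A | w y ≠ 0} : Finset (E n)).centerMass w id = x := by
      rw [Finset.centerMass_filter_ne_zero, hwx]
    rw [← hmass]
    apply Finset.centerMass_mem_convexHull
    · intro i hi; exact hw0 i (Finset.mem_filter.1 hi).1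
    · rw [Finset.sum_filter_ne_zero, hw1]; norm_num
    · intro i hi
      obtain ⟨hiA, hiw⟩ := Finset.mem_filter.1 hi
      exact ⟨hiA, hsupp i hiA hiw⟩
  · apply convexHull_min
    · rintro a ⟨haA, hfa⟩
      exact ⟨subset_convexHull ℚ _ (Finset.mem_coe.2 haA), hfa⟩
    · have : {x ∈ convexHull ℚ (A : Set (E n)) | f x = c}
          = convexHull ℚ (A : Set (E n)) ∩ {x | f x = c} := by ext x; simp [Set.mem_sep_iff]
      rw [this]
      exact (convex_convexHull ℚ _).inter (convex_hyperplane f.isLinear c)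

/-! ### Extreme points of hulls of finite sets -/

lemma mem_hull_erase_of_not_extreme {A : Finset (E n)} {a : E n} (ha : a ∈ A)
    (h : a ∉ (convexHull ℚ (A : Set (E n))).extremePoints ℚ) :
    a ∈ convexHull ℚ ((A.erase a : Finset (E n)) : Set (E n)) := by
  classical
  rw [mem_extremePoints] at h
  push_neg at h
  obtain ⟨y, hy, z, hz, hseg, hne⟩ := h (subset_convexHull ℚ _ (Finset.mem_coe.2 ha))
  rw [Finset.convexHull_eq] at hy hz
  obtain ⟨wy, hwy0, hwy1, hwyc⟩ := hy
  obtain ⟨wz, hwz0, hwz1, hwzc⟩ := hz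
  obtain ⟨θ, θ', hθ, hθ', hsum, hcomb⟩ := hseg
  have hyv : y = ∑ b ∈ A, wy b • b := by
    rw [← hwyc, Finset.centerMass_eq_of_sum_1 _ _ hwy1]; rfl
  have hzv : z = ∑ b ∈ A, wz b • b := by
    rw [← hwzc, Finset.centerMass_eq_of_sum_1 _ _ hwz1]; rfl
  set w : E n → ℚ := fun b => θ * wy b + θ' * wz b with hw
  have hw0 : ∀ b ∈ A, 0 ≤ w b := fun b hb =>
    add_nonneg (mul_nonneg hθ.le (hwy0 b hb)) (mul_nonneg hθ'.le (hwz0 b hb))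
  have hw1 : ∑ b ∈ A, w b = 1 := by
    rw [hw]; simp only
    rw [Finset.sum_add_distrib, ← Finset.mul_sum, ← Finset.mul_sum, hwy1, hwz1]
    simpa using hsum
  have hwc : ∑ b ∈ A, w b • b = a := by
    have : ∑ b ∈ A, w b • b = θ • y + θ' • z := by
      rw [hyv, hzv, Finset.smul_sum, Finset.smul_sum, ← Finset.sum_add_distrib]
      exact Finset.sum_congr rfl fun b _ => by
        simp [hw, add_smul, smul_smul]
    rw [this, hcomb]
  by_cases hwa : w a = 1
  · exfalso
    have herase : ∑ b ∈ A.erase a, w b = 0 := by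
      have := Finset.sum_erase_add A w ha
      rw [hw1] at this; linarith [this, hwa]
    have hwyA : wy a ≤ 1 := by
      have := Finset.single_le_sum (fun b hb => hwy0 b hb) ha
      rw [hwy1] at this; exact this
    have hwzA : wz a ≤ 1 := by
      have := Finset.single_le_sum (fun b hb => hwz0 b hb) ha
      rw [hwz1] at this; exact this
    have h1 : θ * wy a + θ' * wz a = 1 := hwa
    have hy' := mul_le_mul_of_nonneg_left hwyA hθ.le
    have hz' := mul_le_mul_of_nonneg_left hwzA hθ'.le
    have hya : wy a = 1 := by
      refine le_antisymm hwyA ?_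
      have : θ * 1 ≤ θ * wy a := by nlinarith
      exact le_of_mul_le_mul_left this hθ
    have hza : wz a = 1 := by
      refine le_antisymm hwzA ?_
      have : θ' * 1 ≤ θ' * wz a := by nlinarith
      exact le_of_mul_le_mul_left this hθ'
    have hyea : y = a := by
      have hsum0 : ∑ b ∈ A.erase a, wy b = 0 := by
        have := Finset.sum_erase_add A wy ha
        rw [hwy1, hya] at this; linarith
      have hzero : ∀ b ∈ A.erase a, wy b = 0 := by
        intro b hb
        have h1 := (Finset.sum_eq_zero_iff_of_nonneg
          (fun b hb => hwy0 b (Finset.mem_of_mem_erase hb))).1 hsum0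
        exact h1 b hb
      rw [hyv, ← Finset.sum_erase_add A _ ha]
      rw [Finset.sum_eq_zero (fun b hb => by rw [hzero b hb, zero_smul]), hya]
      simp
    have hzea : z = a := by
      have hsum0 : ∑ b ∈ A.erase a, wz b = 0 := by
        have := Finset.sum_erase_add A wz ha
        rw [hwz1, hza] at this; linarith
      have hzero : ∀ b ∈ A.erase a, wz b = 0 := by
        intro b hb
        have h1 := (Finset.sum_eq_zero_iff_of_nonneg
          (fun b hb => hwz0 b (Finset.mem_of_mem_erase hb))).1 hsum0
        exact h1 b hb
      rw [hzv, ← Finset.sum_erase_add A _ ha]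
      rw [Finset.sum_eq_zero (fun b hb => by rw [hzero b hb, zero_smul]), hza]
      simp
    exact hne hyea hzea
  · have hwale : w a ≤ 1 := by
      have := Finset.single_le_sum (fun b hb => hw0 b hb) ha
      rw [hw1] at this; exact this
    have hwalt : w a < 1 := lt_of_le_of_ne hwale hwa
    have hsumerase : ∑ b ∈ A.erase a, w b = 1 - w a := by
      have := Finset.sum_erase_add A w ha
      rw [hw1] at this; linarith
    have hsplit : ∑ b ∈ A.erase a, w b • b + w a • a = a := by
      have h0 := Finset.sum_erase_add A (fun b => w b • b) ha
      rw [hwc] at h0; exact h0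
    have hvecerase : ∑ b ∈ A.erase a, w b • b = (1 - w a) • a := by
      rw [sub_smul, one_smul]
      exact eq_sub_of_add_eq hsplit
    have hmass : (A.erase a).centerMass w id = a := by
      unfold Finset.centerMass
      rw [hsumerase]
      have : ∑ i ∈ A.erase a, w i • id i = (1 - w a) • a := hvecerase
      rw [this, smul_smul, inv_mul_cancel₀ (by linarith), one_smul]
    have hfin := Finset.centerMass_mem_convexHull (A.erase a)
      (fun b hb => hw0 b (Finset.mem_of_mem_erase hb))
      (by rw [hsumerase]; linarith)
      (fun b hb => Finset.mem_coe.2 hb)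
    rw [show ((A.erase a).centerMass w fun b => b) = a from hmass] at hfin
    exact hfin

lemma hull_erase_eq {A : Finset (E n)} {a : E n} (ha : a ∈ A)
    (hmem : a ∈ convexHull ℚ ((A.erase a : Finset (E n)) : Set (E n))) :
    convexHull ℚ (A : Set (E n)) = convexHull ℚ ((A.erase a : Finset (E n)) : Set (E n)) := by
  apply Set.Subset.antisymm
  · apply convexHull_min
    · intro b hb
      rw [Finset.mem_coe] at hb
      rcases eq_or_ne b a with rfl | hba
      · exact hmem
      · exact subset_convexHull ℚ _ (Finset.mem_coe.2 (Finset.mem_erase.2 ⟨hba, hb⟩))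
    · exact convex_convexHull ℚ _
  · exact convexHull_mono (by exact_mod_cast Finset.erase_subset a A)

lemma exists_extreme_hull :
    ∀ A : Finset (E n), A.Nonempty →
      ((convexHull ℚ (A : Set (E n))).extremePoints ℚ).Nonempty := by
  classical
  intro A
  induction A using Finset.strongInduction with
  | _ A ih =>
    intro hA
    by_cases hall : ∀ a ∈ A, a ∈ (convexHull ℚ (A : Set (E n))).extremePoints ℚ
    · obtain ⟨a, ha⟩ := hA; exact ⟨a, hall a ha⟩
    · push_neg at hall
      obtain ⟨a, ha, hnot⟩ := hall
      have hmem := mem_hull_erase_of_not_extreme ha hnot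
      have hne' : (A.erase a).Nonempty := by
        by_contra hempty
        rw [Finset.not_nonempty_iff_eq_empty] at hempty
        rw [hempty] at hmem; simp at hmem
      rw [hull_erase_eq ha hmem]
      exact ih _ (Finset.erase_ssubset ha) hne'

/-- Minkowski's theorem for rational polytopes: the convex hull of a finite set is the
convex hull of its extreme points. -/
lemma hull_eq_hull_extremePoints :
    ∀ A : Finset (E n),
      convexHull ℚ (A : Set (E n))
        = convexHull ℚ ((convexHull ℚ (A : Set (E n))).extremePoints ℚ) := by
  classical
  intro A
  induction A using Finset.strongInduction with
  | _ A ih =>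
    by_cases hall : ∀ a ∈ A, a ∈ (convexHull ℚ (A : Set (E n))).extremePoints ℚ
    · apply Set.Subset.antisymm
      · exact convexHull_min (fun b hb => subset_convexHull ℚ _ (hall b (Finset.mem_coe.1 hb)))
          (convex_convexHull ℚ _)
      · exact convexHull_min (fun x hx => extremePoints_subset hx) (convex_convexHull ℚ _)
    · push_neg at hall
      obtain ⟨a, ha, hnot⟩ := hall
      have hmem := mem_hull_erase_of_not_extreme ha hnot
      rw [hull_erase_eq ha hmem]
      exact ih _ (Finset.erase_ssubset ha)
/-! ### Extreme point transitivity, boxes, integrality -/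

set_option maxHeartbeats 1000000

lemma extreme_of_face_extreme {Q : Set (E n)} (f : E n →ₗ[ℚ] ℚ) {c : ℚ}
    (hQ : ∀ x ∈ Q, c ≤ f x) {x : E n}
    (hx : x ∈ ({y ∈ Q | f y = c}).extremePoints ℚ) : x ∈ Q.extremePoints ℚ := by
  obtain ⟨⟨hxQ, hxc⟩, hseg⟩ := hx
  refine ⟨hxQ, fun y hy z hz hxyz => ?_⟩
  obtain ⟨θ, θ', hθ, hθ', hsum, hcomb⟩ := hxyz
  have hfy := hQ y hy
  have hfz := hQ z hz
  have hfx : θ * f y + θ' * f z = c := by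
    rw [← hxc, ← hcomb, map_add, map_smul, map_smul]; rfl
  have t1 : 0 ≤ θ * (f y - c) := mul_nonneg hθ.le (by linarith)
  have t2 : 0 ≤ θ' * (f z - c) := mul_nonneg hθ'.le (by linarith)
  have h1 : θ * (f y - c) + θ' * (f z - c) = 0 := by
    have : θ * (f y - c) + θ' * (f z - c) = (θ * f y + θ' * f z) - (θ + θ') * c := by ring
    rw [this, hfx, hsum]; ring
  have hyc : f y = c := by
    have : θ * (f y - c) = 0 := by linarith
    rcases mul_eq_zero.1 this with h | h
    · exact absurd h (ne_of_gt hθ)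
    · linarith
  have hzc : f z = c := by
    have : θ' * (f z - c) = 0 := by linarith
    rcases mul_eq_zero.1 this with h | h
    · exact absurd h (ne_of_gt hθ')
    · linarith
  exact hseg ⟨hy, hyc⟩ ⟨hz, hzc⟩ ⟨θ, θ', hθ, hθ', hsum, hcomb⟩

lemma mem_extremePoints_of_subset {Q F : Set (E n)} (hFQ : F ⊆ Q) {x : E n}
    (hx : x ∈ Q.extremePoints ℚ) (hxF : x ∈ F) : x ∈ F.extremePoints ℚ :=
  ⟨hxF, fun y hy z hz hseg => hx.2 (hFQ hy) (hFQ hz) hseg⟩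

lemma pairing_single_right (x : E n) (i : Fin n) : pairing x (Pi.single i 1) = x i := by
  rw [pairing_comm, pairing_single_left]

lemma exists_box_subset_of_mem_interior {P : Set (E n)} (h : (0 : E n) ∈ interior P) :
    ∃ δ : ℚ, 0 < δ ∧ ∀ x : E n, (∀ i, |x i| ≤ δ) → x ∈ P := by
  obtain ⟨ε, hε, hball⟩ := Metric.isOpen_iff.1 isOpen_interior 0 h
  obtain ⟨δ, hδ0, hδε⟩ := exists_rat_btwn (half_pos hε)
  refine ⟨δ, by exact_mod_cast hδ0, fun x hx => ?_⟩
  have hd : dist x 0 ≤ (δ : ℝ) := by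
    rw [dist_pi_le_iff (by exact_mod_cast hδ0.le)]
    intro i
    have : dist (x i) ((0 : E n) i) = |((x i : ℝ))| := by
      rw [show ((0 : E n) i) = (0:ℚ) from rfl, Rat.dist_eq]
      simp
    rw [this]
    rw [show |((x i : ℝ))| = ((|x i| : ℚ) : ℝ) by push_cast; ring]
    exact_mod_cast hx i
  have hmem : x ∈ Metric.ball (0 : E n) ε :=
    Metric.mem_ball.2 (lt_of_le_of_lt hd (by linarith [hδε, half_lt_self hε]))
  exact interior_subset (hball hmem)

lemma exists_bound_of_hull (S : Finset (E n)) :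
    ∃ M : ℚ, 0 < M ∧ ∀ x ∈ convexHull ℚ (S : Set (E n)), ∀ i, |x i| ≤ M := by
  classical
  obtain ⟨M, hM⟩ : ∃ M : ℚ, M = (∑ a ∈ S, ∑ i, |a i|) + 1 := ⟨_, rfl⟩
  have hM0 : 0 < M := by
    rw [hM]
    have : (0:ℚ) ≤ ∑ a ∈ S, ∑ i, |a i| :=
      Finset.sum_nonneg fun a _ => Finset.sum_nonneg fun i _ => abs_nonneg _
    linarith
  refine ⟨M, hM0, fun x hx i => ?_⟩
  have key : ∀ a ∈ S, |a i| ≤ M - 1 := by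
    intro a ha
    have h1 : |a i| ≤ ∑ j, |a j| :=
      Finset.single_le_sum (fun j _ => abs_nonneg (a j)) (Finset.mem_univ i)
    have h2 : (∑ j, |a j|) ≤ ∑ b ∈ S, ∑ j, |b j| := by
      apply Finset.single_le_sum (f := fun b => ∑ j, |b j|)
        (fun b _ => Finset.sum_nonneg fun j _ => abs_nonneg (b j)) ha
    rw [hM]; linarith
  have hub : ∀ a ∈ (S : Set (E n)), pairing a (Pi.single i 1) ≤ M := by
    intro a ha
    rw [pairing_single_right]
    have h2 := abs_le.1 (le_trans (key a (Finset.mem_coe.1 ha)) (by linarith) : |a i| ≤ M)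
    exact h2.2
  have hlb : ∀ a ∈ (S : Set (E n)), -M ≤ pairing a (Pi.single i 1) := by
    intro a ha
    rw [pairing_single_right]
    have h2 := abs_le.1 (le_trans (key a (Finset.mem_coe.1 ha)) (by linarith) : |a i| ≤ M)
    exact h2.1
  have h1 := hull_pairing_le hub x hx
  have h2 := hull_pairing_ge hlb x hx
  rw [pairing_single_right] at h1 h2
  exact abs_le.2 ⟨h2, h1⟩

lemma box_subset_dual {P : Set (E n)} {M : ℚ} (hM : 0 < M)
    (hbound : ∀ x ∈ P, ∀ i, |x i| ≤ M) :
    ∀ y : E n, (∀ i, |y i| ≤ 1 / (n * M + 1)) → y ∈ dualPolytope P := by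
  intro y hy x hx
  have hpos : (0:ℚ) < n * M + 1 := by positivity
  have habs : |pairing x y| ≤ ∑ i, |x i| * |y i| := by
    calc |pairing x y| ≤ ∑ i, |x i * y i| := Finset.abs_sum_le_sum_abs _ _
      _ = ∑ i, |x i| * |y i| := Finset.sum_congr rfl fun i _ => abs_mul _ _
  have hsum : ∑ i : Fin n, |x i| * |y i| ≤ n * (M * (1/(n*M+1))) := by
    calc ∑ i : Fin n, |x i| * |y i| ≤ ∑ _i : Fin n, M * (1/(n*M+1)) :=
          Finset.sum_le_sum fun i _ =>
            mul_le_mul (hbound x hx i) (hy i) (abs_nonneg _) hM.le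
      _ = n * (M * (1/(n*M+1))) := by
          rw [Finset.sum_const, Finset.card_univ, Fintype.card_fin, nsmul_eq_mul]
  have hfrac : (n:ℚ) * (M * (1/(n*M+1))) < 1 := by
    rw [div_eq_inv_mul, mul_one]
    have h1 : (n:ℚ) * (M * (n*M+1)⁻¹) = (n*M) * (n*M+1)⁻¹ := by ring
    rw [h1, ← div_eq_mul_inv, div_lt_one hpos]
    linarith
  have : |pairing x y| < 1 := lt_of_le_of_lt (le_trans habs hsum) hfrac
  have := abs_lt.1 this
  linarith [this.1]

lemma zero_not_extreme {Q : Set (E n)} (hn : 1 ≤ n) {δ : ℚ} (hδ : 0 < δ)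
    (hbox : ∀ y : E n, (∀ i, |y i| ≤ δ) → y ∈ Q) : (0 : E n) ∉ Q.extremePoints ℚ := by
  intro h
  set i₀ : Fin n := ⟨0, hn⟩ with hi₀
  set p : E n := Pi.single i₀ δ with hp
  have hpQ : p ∈ Q := hbox p fun i => by
    rcases eq_or_ne i i₀ with rfl | hne
    · simp [hp, abs_of_nonneg hδ.le]
    · simp [hp, Pi.single_apply, hne, hδ.le]
  have hnpQ : -p ∈ Q := hbox (-p) fun i => by
    rcases eq_or_ne i i₀ with rfl | hne
    · simp [hp, abs_of_nonpos, hδ.le, abs_of_nonneg hδ.le]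
    · simp [hp, Pi.single_apply, hne, hδ.le]
  have hseg : (0 : E n) ∈ openSegment ℚ p (-p) := by
    refine ⟨1/2, 1/2, by norm_num, by norm_num, by norm_num, ?_⟩
    ext i; simp
  have hp0 := h.2 hpQ hnpQ hseg
  have : p i₀ = 0 := by rw [hp0]; rfl
  rw [hp] at this
  simp at this
  exact absurd this (ne_of_gt hδ)

lemma exists_mem_pairing_neg {Q : Set (E n)} {δ : ℚ} (hδ : 0 < δ)
    (hbox : ∀ y : E n, (∀ i, |y i| ≤ δ) → y ∈ Q) {b : E n} (hb : b ≠ 0) :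
    ∃ x ∈ Q, pairing x b < 0 := by
  classical
  refine ⟨fun k => if 0 < b k then -δ else if b k < 0 then δ else 0, ?_, ?_⟩
  · apply hbox
    intro i
    split_ifs
    · rw [abs_of_nonpos (by linarith)]; linarith
    · rw [abs_of_nonneg hδ.le]
    · simpa using hδ.le
  · have hterm0 : ∀ k : Fin n,
        (if 0 < b k then -δ else if b k < 0 then δ else 0) * b k ≤ 0 := by
      intro k; split_ifs with h1 h2
      · nlinarith
      · nlinarith
      · simp
    obtain ⟨k₀, hk₀⟩ : ∃ k, b k ≠ 0 := by
      by_contra hc; push_neg at hc; exact hb (funext hc)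
    have hterm1 : (if 0 < b k₀ then -δ else if b k₀ < 0 then δ else 0) * b k₀ < 0 := by
      rcases lt_trichotomy (b k₀) 0 with h | h | h
      · rw [if_neg (by linarith), if_pos h]; nlinarith
      · exact absurd h hk₀
      · rw [if_pos h]; nlinarith
    have hlt := Finset.sum_lt_sum
      (f := fun k => (if 0 < b k then -δ else if b k < 0 then δ else 0) * b k)
      (g := fun _ => (0:ℚ)) (fun k _ => hterm0 k) ⟨k₀, Finset.mem_univ _, hterm1⟩
    unfold pairing
    simpa using hlt

lemma pairing_int {v u : E n} (hv : IsLatticePt v) (hu : IsLatticePt u) :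
    ∃ z : ℤ, pairing v u = (z : ℚ) := by
  choose zv hzv using hv
  choose zu hzu using hu
  refine ⟨∑ i, zv i * zu i, ?_⟩
  unfold pairing
  push_cast
  exact Finset.sum_congr rfl fun i _ => by rw [hzv i, hzu i]

lemma rat_int_ge_zero {r : ℚ} (z : ℤ) (hz : r = (z : ℚ)) (h1 : -1 ≤ r) (h2 : r ≠ -1) :
    0 ≤ r := by
  subst hz
  have ha : (-1 : ℤ) ≤ z := by exact_mod_cast h1
  have hb : z ≠ -1 := by
    intro h; apply h2; rw [h]; norm_num
  have : (0:ℤ) ≤ z := by omega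
  exact_mod_cast this

lemma rat_int_ge_one {r : ℚ} (z : ℤ) (hz : r = (z : ℚ)) (h1 : -1 ≤ r) (h2 : r ≠ -1)
    (h3 : r ≠ 0) : 1 ≤ r := by
  subst hz
  have ha : (-1 : ℤ) ≤ z := by exact_mod_cast h1
  have hb : z ≠ -1 := fun h => h2 (by rw [h]; norm_num)
  have hc : z ≠ 0 := fun h => h3 (by rw [h]; norm_num)
  have : (1:ℤ) ≤ z := by omega
  exact_mod_cast this
/-! ### Facet geometry -/

lemma pairing_sub_left (x y u : E n) : pairing (x - y) u = pairing x u - pairing y u := by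
  rw [pairing_comm, pairing_sub_right, pairing_comm u x, pairing_comm u y]

lemma min_face_eq {p q c α β : ℚ} (hp : c ≤ p) (hq : c ≤ q) (hα : 0 < α) (hβ : 0 < β)
    (hsum : α + β = 1) (hcomb : α * p + β * q = c) : p = c ∧ q = c := by
  have t1 : 0 ≤ α * (p - c) := mul_nonneg hα.le (by linarith)
  have t2 : 0 ≤ β * (q - c) := mul_nonneg hβ.le (by linarith)
  have h1 : α * (p - c) + β * (q - c) = 0 := by
    have h : α * (p - c) + β * (q - c) = (α * p + β * q) - (α + β) * c := by ring
    rw [h, hcomb, hsum]; ring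
  constructor
  · have h : α * (p - c) = 0 := by linarith
    rcases mul_eq_zero.1 h with h' | h'
    · exact absurd h' (ne_of_gt hα)
    · linarith
  · have h : β * (q - c) = 0 := by linarith
    rcases mul_eq_zero.1 h with h' | h'
    · exact absurd h' (ne_of_gt hβ)
    · linarith

lemma finrank_vectorSpan_of_span_top (hn : 1 ≤ n) {F : Set (E n)} {u : E n}
    (hF : ∀ x ∈ F, pairing x u = -1) (hne : F.Nonempty)
    (htop : Submodule.span ℚ F = ⊤) :
    Module.finrank ℚ (vectorSpan ℚ F) = n - 1 := by
  obtain ⟨x₀, hx₀⟩ := hne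
  have hx₀u : pairing x₀ u = -1 := hF x₀ hx₀
  have hx₀ne : x₀ ≠ 0 := by
    intro h; rw [h, pairing_zero_left] at hx₀u; norm_num at hx₀u
  have hker : vectorSpan ℚ F ≤ LinearMap.ker (pairLin u) := by
    rw [vectorSpan_def, Submodule.span_le]
    rintro v ⟨a, ha, b, hb, rfl⟩
    simp only [SetLike.mem_coe, LinearMap.mem_ker]
    have hab : a -ᵥ b = a - b := rfl
    rw [hab, pairLin_apply, pairing_sub_left, hF a ha, hF b hb]
    ring
  have hfrange : LinearMap.range (pairLin u) = ⊤ := by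
    rw [LinearMap.range_eq_top]
    intro c
    refine ⟨(-c) • x₀, ?_⟩
    rw [pairLin_apply, pairing_smul_left, hx₀u]; ring
  have hkerrank : Module.finrank ℚ (LinearMap.ker (pairLin u)) = n - 1 := by
    have h1 := LinearMap.finrank_range_add_finrank_ker (pairLin u)
    rw [hfrange, finrank_top] at h1
    have h2 : Module.finrank ℚ (E n) = n := Module.finrank_fin_fun ℚ
    have h3 : Module.finrank ℚ ℚ = 1 := Module.finrank_self ℚ
    rw [h2, h3] at h1
    omega
  have hupper : Module.finrank ℚ (vectorSpan ℚ F) ≤ n - 1 := by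
    rw [← hkerrank]; exact Submodule.finrank_mono hker
  have hsupeq : vectorSpan ℚ F ⊔ Submodule.span ℚ {x₀} = ⊤ := by
    rw [eq_top_iff, ← htop, Submodule.span_le]
    intro a ha
    have hrw : a = (a - x₀) + x₀ := by abel
    rw [hrw]
    exact SetLike.mem_coe.2 (Submodule.add_mem _
      (Submodule.mem_sup_left (vsub_mem_vectorSpan ℚ ha hx₀))
      (Submodule.mem_sup_right (Submodule.mem_span_singleton_self x₀)))
  have hinf := Submodule.finrank_sup_add_finrank_inf_eq (vectorSpan ℚ F) (Submodule.span ℚ {x₀})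
  rw [hsupeq, finrank_top, Module.finrank_fin_fun, finrank_span_singleton hx₀ne] at hinf
  omega

lemma normal_extreme_of_facet {P : Set (E n)} {u : E n}
    (hu : u ∈ dualPolytope P) (htop : Submodule.span ℚ (facetOf P u) = ⊤) :
    u ∈ (dualPolytope P).extremePoints ℚ := by
  refine ⟨hu, fun y hy z hz hseg => ?_⟩
  obtain ⟨θ, θ', hθ, hθ', hsum, hcomb⟩ := hseg
  have hkey : ∀ x ∈ facetOf P u, pairing x y = -1 ∧ pairing x z = -1 := by
    intro x hx
    have h3 : θ * pairing x y + θ' * pairing x z = -1 := by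
      rw [← hx.2, ← hcomb, pairing_add_right, pairing_smul_right, pairing_smul_right]
    exact min_face_eq (hy x hx.1) (hz x hx.1) hθ hθ' hsum h3
  have hy' : ∀ x : E n, pairing x (y - u) = 0 := by
    have hkery : ∀ x ∈ facetOf P u, pairing x (y - u) = 0 := fun x hx => by
      rw [pairing_sub_right, (hkey x hx).1, hx.2]; ring
    intro x
    have hx' : x ∈ Submodule.span ℚ (facetOf P u) := by rw [htop]; trivial
    induction hx' using Submodule.span_induction with
    | mem a ha => exact hkery a ha
    | zero => rw [pairing_zero_left]
    | add a b _ _ ha hb => rw [pairing_add_left, ha, hb]; ring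
    | smul c a _ ha => rw [pairing_smul_left, ha]; ring
  have hz' : ∀ x : E n, pairing x (z - u) = 0 := by
    have hkerz : ∀ x ∈ facetOf P u, pairing x (z - u) = 0 := fun x hx => by
      rw [pairing_sub_right, (hkey x hx).2, hx.2]; ring
    intro x
    have hx' : x ∈ Submodule.span ℚ (facetOf P u) := by rw [htop]; trivial
    induction hx' using Submodule.span_induction with
    | mem a ha => exact hkerz a ha
    | zero => rw [pairing_zero_left]
    | add a b _ _ ha hb => rw [pairing_add_left, ha, hb]; ring
    | smul c a _ ha => rw [pairing_smul_left, ha]; ring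
  · have := eq_zero_of_pairing_right (y - u) hy'
    have : y = u := by
      have h := sub_eq_zero.1 this
      exact h
    exact this

lemma mem_dual_of_S {P : Set (E n)} {S : Finset (E n)}
    (hSP : P = convexHull ℚ (S : Set (E n))) {y : E n}
    (h : ∀ a ∈ S, -1 ≤ pairing a y) : y ∈ dualPolytope P := by
  intro x hx
  rw [hSP] at hx
  exact hull_pairing_ge (fun a ha => h a (Finset.mem_coe.1 ha)) x hx

lemma S_nonempty {P : Set (E n)} {S : Finset (E n)}
    (hSP : P = convexHull ℚ (S : Set (E n))) (hP0 : (0 : E n) ∈ P) : S.Nonempty := by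
  rcases S.eq_empty_or_nonempty with rfl | h
  · rw [hSP] at hP0; simp at hP0
  · exact h

lemma facet_nonempty (hn : 1 ≤ n) {P : Set (E n)} {S : Finset (E n)}
    (hSP : P = convexHull ℚ (S : Set (E n))) (hint : (0 : E n) ∈ interior P)
    {u : E n} (hu : u ∈ (dualPolytope P).extremePoints ℚ) :
    (facetOf P u).Nonempty := by
  classical
  have hP0 : (0 : E n) ∈ P := interior_subset hint
  have hSne : S.Nonempty := S_nonempty hSP hP0
  -- u ≠ 0
  obtain ⟨M, hM0, hMb⟩ := exists_bound_of_hull S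
  have hMb' : ∀ x ∈ P, ∀ i, |x i| ≤ M := by rw [hSP]; exact hMb
  have hune : u ≠ 0 := by
    intro h0
    apply zero_not_extreme hn (show (0:ℚ) < 1 / (n * M + 1) by positivity)
      (box_subset_dual hM0 hMb')
    rw [← h0]; exact hu
  have hSub : ∀ a ∈ S, -1 ≤ pairing a u := fun a ha =>
    hu.1 a (by rw [hSP]; exact subset_convexHull ℚ _ (Finset.mem_coe.2 ha))
  obtain ⟨m, hm⟩ : ∃ m : ℚ, m = S.inf' hSne (fun a => pairing a u) := ⟨_, rfl⟩
  have hmle : ∀ a ∈ S, m ≤ pairing a u := fun a ha => by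
    rw [hm]; exact Finset.inf'_le _ ha
  have hmP : ∀ x ∈ P, m ≤ pairing x u := by
    rw [hSP]; exact hull_pairing_ge (fun a ha => hmle a (Finset.mem_coe.1 ha))
  have hm1 : -1 ≤ m := by
    rw [hm]; exact Finset.le_inf' _ _ (fun a ha => hSub a ha)
  have hm0 : m ≤ 0 := by
    have := hmP 0 hP0
    rw [pairing_zero_left] at this; exact this
  rcases eq_or_lt_of_le hm1 with heq | hlt
  · -- m = -1 : attained
    obtain ⟨a, ha, hav⟩ := S.exists_mem_eq_inf' hSne (fun a => pairing a u)
    refine ⟨a, ?_, ?_⟩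
    · rw [hSP]; exact subset_convexHull ℚ _ (Finset.mem_coe.2 ha)
    · rw [← hav, ← hm, ← heq]
  · exfalso
    rcases lt_or_eq_of_le hm0 with hmneg | hmzero
    · -- -1 < m < 0 : scaling argument
      have hmne : m ≠ 0 := ne_of_lt hmneg
      set w : E n := (-(1:ℚ)/m) • u with hw
      have hcpos : 0 < -(1:ℚ)/m := by
        apply div_pos_of_neg_of_neg <;> linarith
      have hwdual : w ∈ dualPolytope P := by
        intro x hx
        rw [hw, pairing_smul_right]
        have h1 : m ≤ pairing x u := hmP x hx
        have h2 : (-(1:ℚ)/m) * m ≤ (-(1:ℚ)/m) * pairing x u :=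
          mul_le_mul_of_nonneg_left h1 hcpos.le
        have h3 : (-(1:ℚ)/m) * m = -1 := by field_simp
        linarith
      have h0dual : (0 : E n) ∈ dualPolytope P := by
        intro x hx; rw [pairing_zero_right]; norm_num
      have hseg : u ∈ openSegment ℚ w (0 : E n) := by
        refine ⟨-m, 1 + m, by linarith, by linarith, by ring, ?_⟩
        rw [hw, smul_smul, smul_zero, add_zero]
        have : -m * (-(1:ℚ)/m) = 1 := by field_simp
        rw [this, one_smul]
      have := hu.2 h0dual hwdual (by rw [openSegment_symm]; exact hseg)
      exact hune this.symm
    · -- m = 0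
      obtain ⟨δ, hδ0, hbox⟩ := exists_box_subset_of_mem_interior hint
      obtain ⟨x, hxP, hxneg⟩ := exists_mem_pairing_neg hδ0 hbox hune
      have := hmP x hxP
      rw [hmzero] at this
      linarith

lemma facet_span_top {P : Set (E n)} {S : Finset (E n)}
    (hSP : P = convexHull ℚ (S : Set (E n)))
    {u : E n} (hu : u ∈ (dualPolytope P).extremePoints ℚ) :
    Submodule.span ℚ (facetOf P u) = ⊤ := by
  classical
  by_contra hne'
  obtain ⟨φ, hφne, hφ⟩ :=
    Submodule.exists_dual_map_eq_bot_of_lt_top (lt_top_iff_ne_top.2 hne') inferInstance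
  obtain ⟨z, hz⟩ := exists_pairing_vec φ
  have hzne : z ≠ 0 := by
    intro h
    apply hφne
    apply LinearMap.ext
    intro x
    rw [← hz x, h, pairing_zero_right]
    rfl
  have hzF : ∀ x ∈ facetOf P u, pairing x z = 0 := by
    intro x hx
    rw [hz]
    have hmem : φ x ∈ Submodule.map φ (Submodule.span ℚ (facetOf P u)) :=
      Submodule.mem_map_of_mem (Submodule.subset_span hx)
    rw [hφ] at hmem
    exact (Submodule.mem_bot ℚ).1 hmem
  have hSub : ∀ a ∈ S, -1 ≤ pairing a u := fun a ha =>
    hu.1 a (by rw [hSP]; exact subset_convexHull ℚ _ (Finset.mem_coe.2 ha))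
  obtain ⟨ε, hεpos, hεb⟩ : ∃ ε : ℚ, 0 < ε ∧
      ∀ a ∈ S, pairing a u ≠ -1 → ε * |pairing a z| < pairing a u + 1 := by
    by_cases hBne : (S.filter (fun a => pairing a u ≠ -1)).Nonempty
    · set B := S.filter (fun a => pairing a u ≠ -1) with hB
      have hpos : ∀ a ∈ B, 0 < (pairing a u + 1) / (|pairing a z| + 1) := by
        intro a ha
        obtain ⟨haS, hane⟩ := Finset.mem_filter.1 ha
        have h1 : -1 < pairing a u := (hSub a haS).lt_of_ne (Ne.symm hane)
        have h2 : (0:ℚ) < |pairing a z| + 1 := by positivity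
        apply div_pos (by linarith) h2
      refine ⟨B.inf' hBne (fun a => (pairing a u + 1) / (|pairing a z| + 1)),
        (Finset.lt_inf'_iff hBne).2 hpos, ?_⟩
      intro a haS hane
      have haB : a ∈ B := Finset.mem_filter.2 ⟨haS, hane⟩
      have hle := Finset.inf'_le (f := fun a => (pairing a u + 1) / (|pairing a z| + 1)) haB
      have habs : (0:ℚ) < |pairing a z| + 1 := by positivity
      have h2 := (le_div_iff₀ habs).1 hle
      have hεp : 0 < B.inf' hBne (fun a => (pairing a u + 1) / (|pairing a z| + 1)) :=
        (Finset.lt_inf'_iff hBne).2 hpos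
      have hexp : B.inf' hBne (fun a => (pairing a u + 1) / (|pairing a z| + 1))
          * (|pairing a z| + 1)
          = B.inf' hBne (fun a => (pairing a u + 1) / (|pairing a z| + 1)) * |pairing a z|
            + B.inf' hBne (fun a => (pairing a u + 1) / (|pairing a z| + 1)) := by ring
      linarith [h2, hexp]
    · exact ⟨1, one_pos, fun a haS hane =>
        absurd (Finset.mem_filter.2 ⟨haS, hane⟩) (by
          rw [Finset.not_nonempty_iff_eq_empty] at hBne
          rw [hBne]; simp)⟩
  have hpert : ∀ s : ℚ, |s| ≤ ε → u + s • z ∈ dualPolytope P := by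
    intro s hs
    apply mem_dual_of_S hSP
    intro a ha
    rw [pairing_add_right, pairing_smul_right]
    by_cases hcase : pairing a u = -1
    · have haF : a ∈ facetOf P u :=
        ⟨by rw [hSP]; exact subset_convexHull ℚ _ (Finset.mem_coe.2 ha), hcase⟩
      rw [hzF a haF, hcase]
      norm_num
    · have hb := hεb a ha hcase
      have habs : |s * pairing a z| ≤ ε * |pairing a z| := by
        rw [abs_mul]
        exact mul_le_mul_of_nonneg_right hs (abs_nonneg _)
      have hlow := neg_abs_le (s * pairing a z)
      linarith
  have hp1 := hpert ε (le_of_eq (abs_of_pos hεpos))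
  have hp2 := hpert (-ε) (by rw [abs_neg, abs_of_pos hεpos])
  have hseg : u ∈ openSegment ℚ (u + ε • z) (u + (-ε) • z) := by
    refine ⟨1/2, 1/2, by norm_num, by norm_num, by norm_num, ?_⟩
    ext i
    simp only [Pi.add_apply, Pi.smul_apply, smul_eq_mul]
    ring
  have hext := hu.2 hp1 hp2 hseg
  have hz0 : ε • z = 0 := by
    have h := hext
    rwa [add_eq_left] at h
  rcases smul_eq_zero.1 hz0 with h | h
  · exact absurd h (ne_of_gt hεpos)
  · exact hzne h

lemma isFacet_facetOf (hn : 1 ≤ n) {P : Set (E n)} (hP0 : (0 : E n) ∈ P)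
    {u : E n} (hu : u ∈ dualPolytope P) (hne : (facetOf P u).Nonempty)
    (htop : Submodule.span ℚ (facetOf P u) = ⊤) : IsFacet P (facetOf P u) := by
  constructor
  · refine ⟨u, -1, fun x hx => hu x hx, rfl, hne, ?_⟩
    intro hEq
    have h0 : (0 : E n) ∈ facetOf P u := by rw [hEq]; exact hP0
    have h1 := h0.2
    rw [pairing_zero_left] at h1
    norm_num at h1
  · rw [direction_affineSpan]
    exact finrank_vectorSpan_of_span_top hn (fun x hx => hx.2) hne htop

set_option maxHeartbeats 4000000 in
/-- A simplicial reflexive polytope of dimension `n` has at most `3n` vertices. -/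
theorem card_vertices_le_three_mul {n : ℕ} (hn : 1 ≤ n) (P : Set (E n))
    (hrefl : IsReflexivePolytope P) (hsimp : IsSimplicial P) :
    (vertices P).ncard ≤ 3 * n := by
  classical
  haveI : Nonempty (Fin n) := ⟨⟨0, hn⟩⟩
  obtain ⟨⟨S, hSlat, hSP⟩, hint, ⟨S', hS'lat, hS'P⟩⟩ := hrefl
  have hP0 : (0 : E n) ∈ P := interior_subset hint
  obtain ⟨δ, hδ0, hbox⟩ := exists_box_subset_of_mem_interior hint
  -- vertices of P
  have hVS : vertices P ⊆ (S : Set (E n)) := by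
    unfold vertices
    rw [hSP]
    exact extremePoints_convexHull_subset
  have hVfin : (vertices P).Finite := S.finite_toSet.subset hVS
  have hVlat : ∀ v ∈ vertices P, IsLatticePt v := fun v hv => hSlat v (hVS hv)
  have hVP : ∀ v ∈ vertices P, v ∈ P := fun v hv => extremePoints_subset hv
  -- dual basics
  have h0dual : (0 : E n) ∈ dualPolytope P := by
    intro x hx; rw [pairing_zero_right]; norm_num
  have hS'ne : S'.Nonempty := S_nonempty hS'P h0dual
  have hdual_lat : ∀ u ∈ (dualPolytope P).extremePoints ℚ, IsLatticePt u := by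
    intro u hu
    apply hS'lat
    have : u ∈ (convexHull ℚ (S' : Set (E n))).extremePoints ℚ := by rw [← hS'P]; exact hu
    exact extremePoints_convexHull_subset this
  -- the vertex sum ν and the special vertex u₀ of P*
  obtain ⟨Vf, hVf⟩ : ∃ Vf : Finset (E n), Vf = hVfin.toFinset := ⟨_, rfl⟩
  have hVfmem : ∀ v, v ∈ Vf ↔ v ∈ vertices P := by
    intro v; rw [hVf]; exact Set.Finite.mem_toFinset hVfin
  obtain ⟨ν, hν⟩ : ∃ ν : E n, ν = ∑ v ∈ Vf, v := ⟨_, rfl⟩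
  obtain ⟨m', hm'⟩ : ∃ m' : ℚ, m' = S'.inf' hS'ne (fun a => pairing ν a) := ⟨_, rfl⟩
  have hm'le : ∀ a ∈ S', m' ≤ pairLinR ν a := fun a ha => by
    rw [hm', pairLinR_apply]; exact Finset.inf'_le _ ha
  have hm'dual : ∀ y ∈ dualPolytope P, m' ≤ pairLinR ν y := by
    rw [hS'P]
    exact hull_f_ge (pairLinR ν) (fun a ha => hm'le a (Finset.mem_coe.1 ha))
  have hface : {y ∈ dualPolytope P | pairLinR ν y = m'}
      = convexHull ℚ {a : E n | a ∈ S' ∧ pairLinR ν a = m'} := by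
    rw [hS'P]
    exact face_hull_eq S' (pairLinR ν) m' (fun a ha => hm'le a ha)
  obtain ⟨A', hA'⟩ : ∃ A' : Finset (E n), A' = S'.filter (fun a => pairing ν a = m') := ⟨_, rfl⟩
  have hA'coe : {a : E n | a ∈ S' ∧ pairLinR ν a = m'} = (A' : Set (E n)) := by
    ext a; rw [hA']; simp [Finset.mem_filter]
  have hA'ne : A'.Nonempty := by
    obtain ⟨a, ha, hav⟩ := S'.exists_mem_eq_inf' hS'ne (fun a => pairing ν a)
    exact ⟨a, by rw [hA']; exact Finset.mem_filter.2 ⟨ha, by rw [← hav, ← hm']⟩⟩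
  obtain ⟨u₀, hu₀A⟩ := exists_extreme_hull A' hA'ne
  have hu₀ex : u₀ ∈ (dualPolytope P).extremePoints ℚ := by
    apply extreme_of_face_extreme (pairLinR ν) hm'dual
    rw [hface, hA'coe]
    exact hu₀A
  have hu₀dual : u₀ ∈ dualPolytope P := hu₀ex.1
  have hu₀lat : IsLatticePt u₀ := hdual_lat u₀ hu₀ex
  have hu₀min : pairing ν u₀ = m' := by
    have h1 : u₀ ∈ {y ∈ dualPolytope P | pairLinR ν y = m'} := by
      rw [hface, hA'coe]
      exact extremePoints_subset hu₀A
    exact h1.2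
  have hm'0 : m' ≤ 0 := by
    have := hm'dual 0 h0dual
    rw [pairLinR_apply, pairing_zero_right] at this
    exact this
  -- the special facet F₀ = facetOf P u₀
  have hF₀ne : (facetOf P u₀).Nonempty := facet_nonempty hn hSP hint hu₀ex
  have hF₀top : Submodule.span ℚ (facetOf P u₀) = ⊤ := facet_span_top hSP hu₀ex
  have hF₀facet : IsFacet P (facetOf P u₀) := isFacet_facetOf hn hP0 hu₀dual hF₀ne hF₀top
  obtain ⟨e, he_vert, he_li⟩ := hsimp _ hF₀facet
  have he_inj : Function.Injective e := he_li.injective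
  have he_F₀ : ∀ j, e j ∈ facetOf P u₀ := fun j => by
    have : e j ∈ vertices (facetOf P u₀) := by rw [he_vert]; exact Set.mem_range_self j
    exact extremePoints_subset this
  have he_u₀ : ∀ j, pairing (e j) u₀ = -1 := fun j => (he_F₀ j).2
  have he_P : ∀ j, e j ∈ P := fun j => (he_F₀ j).1
  have he_vertP : ∀ j, e j ∈ vertices P := by
    intro j
    apply extreme_of_face_extreme (pairLin u₀) (fun x hx => hu₀dual x hx)
    have : e j ∈ vertices (facetOf P u₀) := by rw [he_vert]; exact Set.mem_range_self j
    exact this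
  -- coordinates
  have hcard : Fintype.card (Fin n) = Module.finrank ℚ (E n) := by
    rw [Fintype.card_fin, Module.finrank_fin_fun]
  obtain ⟨B, hBe⟩ : ∃ B : Module.Basis (Fin n) ℚ (E n), ∀ j, B j = e j :=
    ⟨basisOfLinearIndependentOfCardEqFinrank he_li hcard,
      fun j => congrFun (coe_basisOfLinearIndependentOfCardEqFinrank he_li hcard) j⟩
  have hco_e : ∀ i j, B.coord i (e j) = if j = i then 1 else 0 := by
    intro i j
    rw [← hBe j, Module.Basis.coord_apply, B.repr_self j]
    exact Finsupp.single_apply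
  have hsum_repr : ∀ v : E n, ∑ i, B.coord i v • e i = v := by
    intro v
    have h1 := B.sum_repr v
    calc ∑ i, B.coord i v • e i = ∑ i, B.repr v i • B i := by
          exact Finset.sum_congr rfl fun i _ => by rw [Module.Basis.coord_apply, hBe i]
      _ = v := h1
  have hpairing_co : ∀ (v y : E n), pairing v y = ∑ i, B.coord i v * pairing (e i) y := by
    intro v y
    conv_lhs => rw [← hsum_repr v]
    rw [pairing_sum_left]
    exact Finset.sum_congr rfl fun i _ => pairing_smul_left _ _ _
  have hlvl : ∀ v : E n, pairing v u₀ = -∑ i, B.coord i v := by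
    intro v
    rw [hpairing_co v u₀]
    rw [← Finset.sum_neg_distrib]
    exact Finset.sum_congr rfl fun i _ => by rw [he_u₀ i]; ring
  -- dual vectors
  obtain ⟨bv, hbv⟩ : ∃ bv : Fin n → E n, ∀ i x, pairing x (bv i) = B.coord i x := by
    have h := fun i => exists_pairing_vec (B.coord i)
    choose bv hbv using h
    exact ⟨bv, hbv⟩
  -- F₀ as hull of the e i
  have hF₀A : facetOf P u₀
      = convexHull ℚ ((S.filter (fun a => pairing a u₀ = -1) : Finset (E n)) : Set (E n)) := by
    have h1 : facetOf P u₀ = {x ∈ convexHull ℚ (S : Set (E n)) | pairLin u₀ x = -1} := by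
      rw [← hSP]; rfl
    have h2 : ∀ a ∈ S, (-1 : ℚ) ≤ pairLin u₀ a := fun a ha =>
      hu₀dual a (by rw [hSP]; exact subset_convexHull ℚ _ (Finset.mem_coe.2 ha))
    rw [h1, face_hull_eq S (pairLin u₀) (-1) h2]
    congr 1
    ext a
    simp [Finset.mem_filter]
  have hF₀hull : facetOf P u₀ = convexHull ℚ (Set.range e) := by
    rw [hF₀A, hull_eq_hull_extremePoints, ← hF₀A]
    have : (facetOf P u₀).extremePoints ℚ = Set.range e := he_vert
    rw [this]
  have hlam_nonneg : ∀ x ∈ facetOf P u₀, ∀ i, 0 ≤ B.coord i x := by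
    intro x hx i
    rw [hF₀hull] at hx
    refine hull_f_ge (B.coord i) ?_ x hx
    rintro a ⟨j, rfl⟩
    rw [hco_e i j]
    split_ifs <;> norm_num
  -- neighbor facets
  have hnbr : ∀ i : Fin n, ∃ u' : E n,
      u' ∈ dualPolytope P ∧ IsLatticePt u' ∧
      (∃ T : ℚ, 0 < T ∧ u' = u₀ + T • bv i) ∧
      IsFacet P (facetOf P u') ∧ (∀ j : Fin n, j ≠ i → e j ∈ facetOf P u') := by
    intro i
    have hbne : bv i ≠ 0 := by
      intro h
      have h1 := hbv i (e i)
      rw [h, pairing_zero_right, hco_e i i, if_pos rfl] at h1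
      norm_num at h1
    obtain ⟨x, hxP, hxneg⟩ := exists_mem_pairing_neg hδ0 hbox hbne
    have hDex : ∃ a ∈ S, pairing a (bv i) < 0 := by
      by_contra hc; push_neg at hc
      have h0 : 0 ≤ pairing x (bv i) := by
        rw [hSP] at hxP
        exact hull_pairing_ge (fun a ha => hc a (Finset.mem_coe.1 ha)) x hxP
      linarith
    obtain ⟨D, hD⟩ : ∃ D : Finset (E n), D = S.filter (fun a => pairing a (bv i) < 0) :=
      ⟨_, rfl⟩
    have hDne : D.Nonempty := by
      obtain ⟨a, ha, hav⟩ := hDex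
      exact ⟨a, by rw [hD]; exact Finset.mem_filter.2 ⟨ha, hav⟩⟩
    have hDS : ∀ a ∈ D, a ∈ S ∧ pairing a (bv i) < 0 := fun a ha => by
      rw [hD] at ha; exact ⟨(Finset.mem_filter.1 ha).1, (Finset.mem_filter.1 ha).2⟩
    have hDgt : ∀ a ∈ D, -1 < pairing a u₀ := by
      intro a haD
      obtain ⟨haS, haneg⟩ := hDS a haD
      have haP : a ∈ P := by rw [hSP]; exact subset_convexHull ℚ _ (Finset.mem_coe.2 haS)
      have h1 : -1 ≤ pairing a u₀ := hu₀dual a haP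
      rcases lt_or_eq_of_le h1 with h | h
      · exact h
      · exfalso
        have haF : a ∈ facetOf P u₀ := ⟨haP, h.symm⟩
        have := hlam_nonneg a haF i
        rw [← hbv i a] at this
        linarith
    obtain ⟨T, hTdef⟩ : ∃ T : ℚ,
        T = D.inf' hDne (fun a => (-1 - pairing a u₀) / pairing a (bv i)) := ⟨_, rfl⟩
    have hT0 : 0 < T := by
      rw [hTdef]
      rw [Finset.lt_inf'_iff]
      intro a ha
      have h1 := hDgt a ha
      have h2 := (hDS a ha).2
      exact div_pos_of_neg_of_neg (by linarith) h2
    have hTle : ∀ a ∈ D, T ≤ (-1 - pairing a u₀) / pairing a (bv i) := fun a ha => by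
      rw [hTdef]; exact Finset.inf'_le _ ha
    have hu'dual : u₀ + T • bv i ∈ dualPolytope P := by
      apply mem_dual_of_S hSP
      intro a haS
      rw [pairing_add_right, pairing_smul_right]
      by_cases hcase : 0 ≤ pairing a (bv i)
      · have h1 : -1 ≤ pairing a u₀ := hu₀dual a
          (by rw [hSP]; exact subset_convexHull ℚ _ (Finset.mem_coe.2 haS))
        nlinarith
      · push_neg at hcase
        have haD : a ∈ D := by rw [hD]; exact Finset.mem_filter.2 ⟨haS, hcase⟩
        have h2 := hTle a haD
        have h3 := (le_div_iff_of_neg hcase).1 h2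
        linarith
    obtain ⟨astar, hastarD, hastarval⟩ :=
      D.exists_mem_eq_inf' hDne (fun a => (-1 - pairing a u₀) / pairing a (bv i))
    have hastarS := (hDS astar hastarD).1
    have hastarneg := (hDS astar hastarD).2
    have hastarP : astar ∈ P := by
      rw [hSP]; exact subset_convexHull ℚ _ (Finset.mem_coe.2 hastarS)
    have hastarF : astar ∈ facetOf P (u₀ + T • bv i) := by
      refine ⟨hastarP, ?_⟩
      rw [pairing_add_right, pairing_smul_right]
      have hTval : T = (-1 - pairing astar u₀) / pairing astar (bv i) := by
        rw [hTdef, hastarval]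
      rw [hTval, div_mul_cancel₀ _ (ne_of_lt hastarneg)]
      ring
    have hejF : ∀ j : Fin n, j ≠ i → e j ∈ facetOf P (u₀ + T • bv i) := by
      intro j hj
      refine ⟨he_P j, ?_⟩
      rw [pairing_add_right, pairing_smul_right, hbv i (e j), hco_e i j,
        if_neg hj, he_u₀ j]
      ring
    -- linear independence of the modified family
    have hastar_co : B.coord i astar < 0 := by
      rw [← hbv i astar]; exact hastarneg
    have hg_li : LinearIndependent ℚ (Function.update e i astar) := by
      rw [Fintype.linearIndependent_iff]
      intro g hg
      have hgi : g i = 0 := by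
        have happ := congrArg (B.coord i) hg
        rw [map_sum, map_zero] at happ
        have hterms : ∀ j : Fin n, j ≠ i →
            B.coord i (g j • Function.update e i astar j) = 0 := by
          intro j hj
          rw [Function.update_of_ne hj, map_smul, hco_e i j, if_neg hj]
          simp
        rw [Finset.sum_eq_single i (fun j _ hj => hterms j hj) (by simp)] at happ
        rw [Function.update_self, map_smul, smul_eq_mul] at happ
        rcases mul_eq_zero.1 happ with h | h
        · exact h
        · exact absurd h (ne_of_lt hastar_co)
      have hg' : ∑ j, g j • e j = 0 := by
        rw [← hg]
        refine Finset.sum_congr rfl fun j _ => ?_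
        rcases eq_or_ne j i with rfl | hj
        · rw [hgi, zero_smul, zero_smul]
        · rw [Function.update_of_ne hj]
      intro j
      exact Fintype.linearIndependent_iff.1 he_li g hg' j
    have hrange_sub : Set.range (Function.update e i astar) ⊆ facetOf P (u₀ + T • bv i) := by
      rintro _ ⟨j, rfl⟩
      rcases eq_or_ne j i with rfl | hj
      · rw [Function.update_self]; exact hastarF
      · rw [Function.update_of_ne hj]; exact hejF j hj
    have hspan' : Submodule.span ℚ (facetOf P (u₀ + T • bv i)) = ⊤ := by
      rw [eq_top_iff, ← hg_li.span_eq_top_of_card_eq_finrank' hcard]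
      exact Submodule.span_mono hrange_sub
    have hfac := isFacet_facetOf hn hP0 hu'dual ⟨astar, hastarF⟩ hspan'
    have hlat : IsLatticePt (u₀ + T • bv i) :=
      hdual_lat _ (normal_extreme_of_facet hu'dual hspan')
    exact ⟨u₀ + T • bv i, hu'dual, hlat, ⟨T, hT0, rfl⟩, hfac, hejF⟩
  choose u' hu'dual hu'lat hu'T hu'facet hu'ej using hnbr
  -- level-0 lemma
  have hlvl0 : ∀ v ∈ vertices P, pairing v u₀ = 0 → ∃ i, v ∈ facetOf P (u' i) := by
    intro v hvV hv0
    by_contra hc; push_neg at hc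
    have hvP : v ∈ P := hVP v hvV
    have hnn : ∀ i, 0 ≤ B.coord i v := by
      intro i
      have h1 : -1 ≤ pairing v (u' i) := hu'dual i v hvP
      have h2 : pairing v (u' i) ≠ -1 := fun h => hc i ⟨hvP, h⟩
      obtain ⟨z, hz⟩ := pairing_int (hVlat v hvV) (hu'lat i)
      have h3 : 0 ≤ pairing v (u' i) := rat_int_ge_zero z hz h1 h2
      obtain ⟨T, hT0, hTdef⟩ := hu'T i
      rw [hTdef, pairing_add_right, pairing_smul_right, hbv, hv0, zero_add] at h3
      by_contra hneg
      push_neg at hneg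
      nlinarith
    have hsum0 : ∑ i, B.coord i v = 0 := by
      have h := hlvl v
      rw [hv0] at h; linarith
    have hall0 : ∀ i, B.coord i v = 0 := fun i =>
      (Finset.sum_eq_zero_iff_of_nonneg (fun i _ => hnn i)).1 hsum0 i (Finset.mem_univ i)
    have hv0' : v = 0 := by
      rw [← hsum_repr v]
      exact Finset.sum_eq_zero fun i _ => by rw [hall0 i, zero_smul]
    exact zero_not_extreme hn hδ0 hbox (hv0' ▸ hvV)
  -- counting: level -1 vertices
  have hC1eq : Vf.filter (fun v => pairing v u₀ = -1) = Finset.image e Finset.univ := by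
    ext v
    simp only [Finset.mem_filter, Finset.mem_image, Finset.mem_univ, true_and]
    constructor
    · rintro ⟨hvVf, hv1⟩
      have hvV : v ∈ vertices P := (hVfmem v).1 hvVf
      have hvF : v ∈ facetOf P u₀ := ⟨hVP v hvV, hv1⟩
      have h5 : v ∈ vertices (facetOf P u₀) :=
        mem_extremePoints_of_subset (fun x hx => hx.1) hvV hvF
      rw [he_vert] at h5
      obtain ⟨j, hj⟩ := h5
      exact ⟨j, hj⟩
    · rintro ⟨j, rfl⟩
      exact ⟨(hVfmem _).2 (he_vertP j), he_u₀ j⟩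
  have hC1card : (Vf.filter (fun v => pairing v u₀ = -1)).card = n := by
    rw [hC1eq, Finset.card_image_of_injective _ he_inj, Finset.card_univ, Fintype.card_fin]
  -- counting: level 0 vertices
  haveI : Inhabited (Fin n) := ⟨⟨0, hn⟩⟩
  obtain ⟨φ, hφ⟩ : ∃ φ : E n → Fin n,
      ∀ v ∈ vertices P, pairing v u₀ = 0 → v ∈ facetOf P (u' (φ v)) := by
    choose! φ hφ using hlvl0
    exact ⟨φ, hφ⟩
  have hC2le : (Vf.filter (fun v => pairing v u₀ = 0)).card ≤ n := by
    have hmaps : ∀ v ∈ Vf.filter (fun v => pairing v u₀ = 0),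
        φ v ∈ (Finset.univ : Finset (Fin n)) := fun v _ => Finset.mem_univ _
    have hinj : ∀ v ∈ Vf.filter (fun v => pairing v u₀ = 0),
        ∀ w ∈ Vf.filter (fun v => pairing v u₀ = 0), φ v = φ w → v = w := by
      intro v hv w hw heq
      obtain ⟨hvVf, hv0⟩ := Finset.mem_filter.1 hv
      obtain ⟨hwVf, hw0⟩ := Finset.mem_filter.1 hw
      have hvV := (hVfmem v).1 hvVf
      have hwV := (hVfmem w).1 hwVf
      obtain ⟨i, hi⟩ : ∃ i, i = φ v := ⟨_, rfl⟩
      have hvF : v ∈ facetOf P (u' i) := by rw [hi]; exact hφ v hvV hv0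
      have hwF : w ∈ facetOf P (u' i) := by rw [hi, heq]; exact hφ w hwV hw0
      obtain ⟨e', he'vert, he'li⟩ := hsimp _ (hu'facet i)
      have he'inj := he'li.injective
      have hvrange : v ∈ Set.range e' := by
        have h5 : v ∈ vertices (facetOf P (u' i)) :=
          mem_extremePoints_of_subset (fun x hx => hx.1) hvV hvF
        rw [he'vert] at h5; exact h5
      have hwrange : w ∈ Set.range e' := by
        have h5 : w ∈ vertices (facetOf P (u' i)) :=
          mem_extremePoints_of_subset (fun x hx => hx.1) hwV hwF
        rw [he'vert] at h5; exact h5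
      have hejrange : ∀ j : Fin n, j ≠ i → e j ∈ Set.range e' := by
        intro j hj
        have h5 : e j ∈ vertices (facetOf P (u' i)) :=
          mem_extremePoints_of_subset (fun x hx => hx.1) (he_vertP j) (hu'ej i j hj)
        rw [he'vert] at h5; exact h5
      by_contra hne
      have hvne : ∀ j, v ≠ e j := by
        intro j h
        have h6 := he_u₀ j
        rw [← h, hv0] at h6
        norm_num at h6
      have hwne : ∀ j, w ≠ e j := by
        intro j h
        have h6 := he_u₀ j
        rw [← h, hw0] at h6
        norm_num at h6
      obtain ⟨R, hR⟩ : ∃ R, R = Finset.image e' Finset.univ := ⟨_, rfl⟩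
      have hRcard : R.card = n := by
        rw [hR, Finset.card_image_of_injective _ he'inj, Finset.card_univ, Fintype.card_fin]
      have hmemR : ∀ x, x ∈ Set.range e' → x ∈ R := by
        rintro x ⟨j, rfl⟩
        rw [hR]
        exact Finset.mem_image_of_mem e' (Finset.mem_univ j)
      have hwimg : w ∉ Finset.image e (Finset.univ.erase i) := by
        intro hmem
        obtain ⟨j, _, hj⟩ := Finset.mem_image.1 hmem
        exact hwne j hj.symm
      have hvins : v ∉ insert w (Finset.image e (Finset.univ.erase i)) := by
        intro hmem
        rcases Finset.mem_insert.1 hmem with h | h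
        · exact hne h
        · obtain ⟨j, _, hj⟩ := Finset.mem_image.1 h
          exact hvne j hj.symm
      have hWsub : insert v (insert w (Finset.image e (Finset.univ.erase i))) ⊆ R := by
        intro x hx
        rcases Finset.mem_insert.1 hx with rfl | hx
        · exact hmemR _ hvrange
        rcases Finset.mem_insert.1 hx with rfl | hx
        · exact hmemR _ hwrange
        obtain ⟨j, hj, rfl⟩ := Finset.mem_image.1 hx
        exact hmemR _ (hejrange j (Finset.ne_of_mem_erase hj))
      have hWcard : (insert v (insert w (Finset.image e (Finset.univ.erase i)))).card
          = n + 1 := by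
        rw [Finset.card_insert_of_notMem hvins, Finset.card_insert_of_notMem hwimg,
          Finset.card_image_of_injective _ he_inj,
          Finset.card_erase_of_mem (Finset.mem_univ i), Finset.card_univ, Fintype.card_fin]
        omega
      have hle := Finset.card_le_card hWsub
      omega
    exact Finset.card_le_card_of_injOn φ hmaps
      (fun v hv w hw heq => hinj v (Finset.mem_coe.1 hv) w (Finset.mem_coe.1 hw) heq)
      |>.trans (by rw [Finset.card_univ, Fintype.card_fin])
  -- counting: levels ≥ 1
  have hsum_levels : ∑ v ∈ Vf, pairing v u₀ ≤ 0 := by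
    have h1 : pairing ν u₀ = ∑ v ∈ Vf, pairing v u₀ := by
      rw [hν]
      exact pairing_sum_left Vf (fun v => v) u₀
    rw [← h1, hu₀min]
    exact hm'0
  have hsplit1 := Finset.sum_filter_add_sum_filter_not Vf
    (fun v => pairing v u₀ = -1) (fun v => pairing v u₀)
  have hsplit2 := Finset.sum_filter_add_sum_filter_not
    (Vf.filter (fun v => ¬pairing v u₀ = -1))
    (fun v => pairing v u₀ = 0) (fun v => pairing v u₀)
  have hS1 : ∑ v ∈ Vf.filter (fun v => pairing v u₀ = -1), pairing v u₀ = -(n : ℚ) := by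
    rw [Finset.sum_congr rfl (fun v hv => (Finset.mem_filter.1 hv).2),
      Finset.sum_const, hC1card]
    simp
  have hS2 : ∑ v ∈ (Vf.filter (fun v => ¬pairing v u₀ = -1)).filter
      (fun v => pairing v u₀ = 0), pairing v u₀ = 0 :=
    Finset.sum_eq_zero fun v hv => (Finset.mem_filter.1 hv).2
  have hS3ge : (((Vf.filter (fun v => ¬pairing v u₀ = -1)).filter
      (fun v => ¬pairing v u₀ = 0)).card : ℚ)
      ≤ ∑ v ∈ (Vf.filter (fun v => ¬pairing v u₀ = -1)).filter
          (fun v => ¬pairing v u₀ = 0), pairing v u₀ := by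
    have h := Finset.card_nsmul_le_sum
      ((Vf.filter (fun v => ¬pairing v u₀ = -1)).filter (fun v => ¬pairing v u₀ = 0))
      (fun v => pairing v u₀) 1 ?_
    · simpa using h
    · intro v hv
      obtain ⟨hv1, hv2⟩ := Finset.mem_filter.1 hv
      obtain ⟨hvVf, hvne1⟩ := Finset.mem_filter.1 hv1
      have hvV := (hVfmem v).1 hvVf
      obtain ⟨z, hz⟩ := pairing_int (hVlat v hvV) hu₀lat
      exact rat_int_ge_one z hz (hu₀dual v (hVP v hvV)) hvne1 hv2
  have hC3le : ((Vf.filter (fun v => ¬pairing v u₀ = -1)).filter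
      (fun v => ¬pairing v u₀ = 0)).card ≤ n := by
    have hsum3 : ∑ v ∈ (Vf.filter (fun v => ¬pairing v u₀ = -1)).filter
        (fun v => ¬pairing v u₀ = 0), pairing v u₀ ≤ (n : ℚ) := by
      have := hsum_levels
      rw [← hsplit1, ← hsplit2] at this
      rw [hS1, hS2] at this
      linarith
    have := le_trans hS3ge hsum3
    exact_mod_cast this
  -- assemble the partition
  have hfilter20 : (Vf.filter (fun v => ¬pairing v u₀ = -1)).filter
      (fun v => pairing v u₀ = 0) = Vf.filter (fun v => pairing v u₀ = 0) := by
    ext v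
    simp only [Finset.mem_filter]
    constructor
    · rintro ⟨⟨h1, _⟩, h3⟩
      exact ⟨h1, h3⟩
    · rintro ⟨h1, h3⟩
      refine ⟨⟨h1, ?_⟩, h3⟩
      rw [h3]
      norm_num
  have hcardsplit1 := Finset.card_filter_add_card_filter_not
    (s := Vf) (p := fun v => pairing v u₀ = -1)
  have hcardsplit2 := Finset.card_filter_add_card_filter_not
    (s := Vf.filter (fun v => ¬pairing v u₀ = -1)) (p := fun v => pairing v u₀ = 0)
  rw [hfilter20] at hcardsplit2
  have hncard : (vertices P).ncard = Vf.card := by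
    rw [hVf]
    exact Set.ncard_eq_toFinset_card _ hVfin
  rw [hncard]
  omega

end Fano
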